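/- Adequacy of v-reduction: if M →_v* M', then M head-β_v-reduces to some value iff M' head-β_v-reduces to some value. Consequently, v-convertible terms are observationally equivalent in Plotkin's call-by-value λ-calculus: M =_v N implies that for every context C, C[M] head-β_v-reduces to a value iff C[N] does. -/

import Mathlib

/-- Terms of the call-by-value λ-calculus, in de Bruijn notation. -/
inductive Term : Type
  | var : ℕ → Term
  | lam : Term → Term
  | app : Term → Term → Term

namespace Term

/-- Values are variables and abstractions. -/
def isValue : Term → Prop
  | var _ => True
  | lam _ => True
  | app _ _ => False

/-- Shift free de Bruijn indices ≥ d by one. -/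
def lift (d : ℕ) : Term → Term
  | var n => if n < d then var n else var (n+1)
  | lam M => lam (lift (d+1) M)
  | app M N => app (lift d M) (lift d N)

/-- Capture-avoiding substitution of `V` for index `k`. -/
def subst : Term → ℕ → Term → Term
  | var n, k, V => if n = k then V else if k < n then var (n-1) else var n
  | lam M, k, V => lam (subst M (k+1) (lift 0 V))
  | app M N, k, V => app (subst M k V) (subst N k V)

/-- Apply a term to a list of arguments: `appList M [M₁,…,Mₘ] = M M₁ … Mₘ`. -/
def appList : Term → List Term → Term
  | M, [] => M
  | M, N :: Ns => appList (app M N) Ns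

/-- Root σ-reduction rules σ₁ and σ₃ (freshness handled by lifting). -/
inductive SigmaBase : Term → Term → Prop
  | sigma1 (M N L : Term) :
      SigmaBase (app (app (lam M) N) L) (app (lam (app M (lift 0 L))) N)
  | sigma3 (V L N : Term) : isValue V →
      SigmaBase (app V (app (lam L) N)) (app (lam (app (lift 0 V) L)) N)

/-- Root rules of v-reduction: β_v, σ₁ and σ₃. -/
inductive VBase : Term → Term → Prop
  | beta (M V : Term) : isValue V → VBase (app (lam M) V) (subst M 0 V)
  | sigma1 (M N L : Term) :
      VBase (app (app (lam M) N) L) (app (lam (app M (lift 0 L))) N)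
  | sigma3 (V L N : Term) : isValue V →
      VBase (app V (app (lam L) N)) (app (lam (app (lift 0 V) L)) N)

/-- Contextual closure of a root relation. -/
inductive Ctx (r : Term → Term → Prop) : Term → Term → Prop
  | base {M M'} : r M M' → Ctx r M M'
  | lam {M M'} : Ctx r M M' → Ctx r (lam M) (lam M')
  | appL {M M'} (N : Term) : Ctx r M M' → Ctx r (app M N) (app M' N)
  | appR (M : Term) {N N'} : Ctx r N N' → Ctx r (app M N) (app M N')

/-- σ-reduction: contextual closure of σ₁ ∪ σ₃. -/
def SigmaRed : Term → Term → Prop := Ctx SigmaBase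

/-- v-reduction: contextual closure of β_v ∪ σ₁ ∪ σ₃. -/
def Red : Term → Term → Prop := Ctx VBase

/-- Head β_v-reduction. -/
inductive HeadBeta : Term → Term → Prop
  | beta (M V : Term) (Ms : List Term) : isValue V →
      HeadBeta (appList (app (lam M) V) Ms) (appList (subst M 0 V) Ms)
  | right (V : Term) {N N'} (Ms : List Term) : isValue V → HeadBeta N N' →
      HeadBeta (appList (app V N) Ms) (appList (app V N') Ms)

/-- Head σ-reduction. -/
inductive HeadSigma : Term → Term → Prop
  | sigma1 (M N L : Term) (Ms : List Term) :
      HeadSigma (appList (app (app (lam M) N) L) Ms)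
                (appList (app (lam (app M (lift 0 L))) N) Ms)
  | sigma3 (V L N : Term) (Ms : List Term) : isValue V →
      HeadSigma (appList (app V (app (lam L) N)) Ms)
                (appList (app (lam (app (lift 0 V) L)) N) Ms)
  | right (V : Term) {N N'} (Ms : List Term) : isValue V → HeadSigma N N' →
      HeadSigma (appList (app V N) Ms) (appList (app V N') Ms)

/-- Head v-reduction: head β_v ∪ head σ. -/
def HeadRed (M N : Term) : Prop := HeadBeta M N ∨ HeadSigma M N

/-- Internal v-reduction: v-steps that are not head v-steps. -/
def IntRed (M N : Term) : Prop := Red M N ∧ ¬ HeadRed M N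

/-- Parallel reduction of the shuffling calculus λ_v^σ. -/
inductive Par : Term → Term → Prop
  | var (x : ℕ) {Ms Ms' : List Term} : List.Forall₂ Par Ms Ms' →
      Par (appList (var x) Ms) (appList (var x) Ms')
  | lam {M M'} {Ms Ms' : List Term} : Par M M' → List.Forall₂ Par Ms Ms' →
      Par (appList (lam M) Ms) (appList (lam M') Ms')
  | beta {M M' V V'} {Ms Ms' : List Term} : isValue V → isValue V' →
      Par M M' → Par V V' → List.Forall₂ Par Ms Ms' →
      Par (appList (app (lam M) V) Ms) (appList (subst M' 0 V') Ms')
  | sigma1 {M M' N N' L L'} {Ms Ms' : List Term} :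
      Par M M' → Par N N' → Par L L' → List.Forall₂ Par Ms Ms' →
      Par (appList (app (app (lam M) N) L) Ms)
          (appList (app (lam (app M' (lift 0 L'))) N') Ms')
  | sigma3 {V V' L L' N N'} {Ms Ms' : List Term} : isValue V → isValue V' →
      Par V V' → Par L L' → Par N N' → List.Forall₂ Par Ms Ms' →
      Par (appList (app V (app (lam L) N)) Ms)
          (appList (app (lam (app (lift 0 V') L')) N') Ms')

/-- Internal parallel reduction. -/
inductive IPar : Term → Term → Prop
  | lam {N N'} : Par N N' → IPar (lam N) (lam N')
  | var (x : ℕ) : IPar (var x) (var x)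
  | right {V V' N N'} {Ms Ms' : List Term} : isValue V → isValue V' →
      Par V V' → IPar N N' → List.Forall₂ Par Ms Ms' →
      IPar (appList (app V N) Ms) (appList (app V' N') Ms')

/-- One-hole contexts. -/
inductive Ctx1 : Type
  | hole : Ctx1
  | lam : Ctx1 → Ctx1
  | appL : Ctx1 → Term → Ctx1
  | appR : Term → Ctx1 → Ctx1

/-- Capture-allowing hole filling. -/
def fill : Ctx1 → Term → Term
  | .hole, M => M
  | .lam C, M => lam (fill C M)
  | .appL C N, M => app (fill C M) N
  | .appR N C, M => app N (fill C M)

/-- `M` halts: head β_v-reduction from `M` reaches a value. -/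
def Halts (M : Term) : Prop := ∃ V, isValue V ∧ Relation.ReflTransGen HeadBeta M V

end Term


/-!
Both directions go through the parallel reduction `Par` of λ_v^σ, which contains `Red`.
If `Par M N` and `M` makes a head β_v-step, `N` follows it with head v-steps and stays
`Par`-related; head σ-steps never affect halting, since they can be postponed past head
β_v-steps. So `N` halts when `M` does. Conversely, a parallel step factors as head v-steps
followed by an internal parallel step (`HeadIPar`), and internal parallel steps neither create
nor destroy head β_v-redexes, so `M` halts when `N` does.
-/

namespace Term

open Relation List

@[simp] lemma isValue_var (x : ℕ) : isValue (var x) := trivial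

@[simp] lemma isValue_lam (M : Term) : isValue (lam M) := trivial

lemma appList_append (M : Term) (Ms Ns : List Term) :
    appList M (Ms ++ Ns) = appList (appList M Ms) Ns := by
  induction Ms generalizing M with
  | nil => rfl
  | cons N Ms ih => exact ih (app M N)

lemma not_isValue_appList_app (M N : Term) (Ms : List Term) :
    ¬ isValue (appList (app M N) Ms) := by
  induction Ms generalizing M N with
  | nil => exact id
  | cons L Ms ih => exact ih (app M N) L

def spineHead : Term → Term
  | app M _ => spineHead M
  | M => M

def spineArgs : Term → List Term
  | app M N => spineArgs M ++ [N]
  | _ => []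

lemma spineHead_appList (M : Term) (Ms : List Term) :
    spineHead (appList M Ms) = spineHead M := by
  induction Ms generalizing M with
  | nil => rfl
  | cons N Ms ih => exact ih (app M N)

lemma spineArgs_appList (M : Term) (Ms : List Term) :
    spineArgs (appList M Ms) = spineArgs M ++ Ms := by
  induction Ms generalizing M with
  | nil => simp [appList]
  | cons N Ms ih => simp [appList, ih (app M N), spineArgs]

lemma appList_inj {V V' : Term} {Ms Ms' : List Term} (hV : isValue V) (hV' : isValue V')
    (e : appList V Ms = appList V' Ms') : V = V' ∧ Ms = Ms' := by
  have hspine (W : Term) (hW : isValue W) : spineHead W = W ∧ spineArgs W = [] := by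
    cases W <;> trivial
  have eHead := congrArg spineHead e
  have eArgs := congrArg spineArgs e
  rw [spineHead_appList, spineHead_appList, (hspine V hV).1, (hspine V' hV').1] at eHead
  rw [spineArgs_appList, spineArgs_appList, (hspine V hV).2, (hspine V' hV').2] at eArgs
  exact ⟨eHead, eArgs⟩

lemma lift_lift_of_le (M : Term) {i j : ℕ} (h : i ≤ j) :
    lift i (lift j M) = lift (j + 1) (lift i M) := by
  induction M generalizing i j with
  | var n => grind [lift]
  | lam M ih => simp [lift, ih (Nat.succ_le_succ h)]
  | app M N ihM ihN => simp [lift, ihM h, ihN h]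

lemma lift_subst_of_le (M V : Term) {i k : ℕ} (h : k ≤ i) :
    lift i (subst M k V) = subst (lift (i + 1) M) k (lift i V) := by
  induction M generalizing i k V with
  | var n => grind [lift, subst]
  | lam M ih =>
    simp [lift, subst, ih _ (Nat.succ_le_succ h), lift_lift_of_le V (Nat.zero_le i)]
  | app M N ihM ihN => simp [lift, subst, ihM V h, ihN V h]

lemma lift_subst_of_ge (M V : Term) {i k : ℕ} (h : i ≤ k) :
    lift i (subst M k V) = subst (lift i M) (k + 1) (lift i V) := by
  induction M generalizing i k V with
  | var n => grind [lift, subst]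
  | lam M ih =>
    simp [lift, subst, ih _ (Nat.succ_le_succ h), lift_lift_of_le V (Nat.zero_le i)]
  | app M N ihM ihN => simp [lift, subst, ihM V h, ihN V h]

@[simp] lemma subst_lift (M V : Term) (i : ℕ) : subst (lift i M) i V = M := by
  induction M generalizing i V with
  | var n => grind [lift, subst]
  | lam M ih => simp [lift, subst, ih]
  | app M N ihM ihN => simp [lift, subst, ihM, ihN]

lemma subst_subst_of_le (M V W : Term) {i k : ℕ} (h : i ≤ k) :
    subst (subst M i V) k W = subst (subst M (k + 1) (lift i W)) i (subst V k W) := by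
  induction M generalizing i k V W with
  | var n => grind [subst, subst_lift]
  | lam M ih =>
    simp only [subst]
    rw [ih _ _ (Nat.succ_le_succ h), lift_lift_of_le W (Nat.zero_le i),
      lift_subst_of_ge V W (Nat.zero_le k)]
  | app M N ihM ihN => simp [subst, ihM V W h, ihN V W h]

lemma isValue_lift {V : Term} (hV : isValue V) {d : ℕ} : isValue (lift d V) := by
  cases V with
  | var n => simp only [lift]; split_ifs <;> trivial
  | lam M => trivial
  | app => exact hV.elim

lemma isValue_subst {V W : Term} (hV : isValue V) (hW : isValue W) (k : ℕ) :
    isValue (subst V k W) := by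
  cases V with
  | var n => simp only [subst]; split_ifs <;> first | exact hW | trivial
  | lam M => trivial
  | app => exact hV.elim

lemma lift_appList (d : ℕ) (M : Term) (Ms : List Term) :
    lift d (appList M Ms) = appList (lift d M) (Ms.map (lift d)) := by
  induction Ms generalizing M with
  | nil => rfl
  | cons N Ms ih => simp [appList, ih (app M N), lift]

lemma subst_appList (M : Term) (Ms : List Term) (k : ℕ) (V : Term) :
    subst (appList M Ms) k V = appList (subst M k V) (Ms.map (subst · k V)) := by
  induction Ms generalizing M with
  | nil => rfl
  | cons N Ms ih => simp [appList, ih (app M N), subst]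

/-- `Par` is nested through `List.Forall₂`, which the `induction` tactic does not support. -/
@[elab_as_elim]
theorem Par.induction {motive : (M N : Term) → Par M N → Prop}
    (var : ∀ (x : ℕ) {Ms Ms' : List Term}
      (ihs : Forall₂ (fun A A' => ∃ hA : Par A A', motive A A' hA) Ms Ms'),
      motive _ _ (Par.var x (ihs.imp fun _ _ h => h.1)))
    (lam : ∀ {M M' : Term} {Ms Ms' : List Term} (hM : Par M M'), motive M M' hM →
      ∀ ihs : Forall₂ (fun A A' => ∃ hA : Par A A', motive A A' hA) Ms Ms',
      motive _ _ (Par.lam hM (ihs.imp fun _ _ h => h.1)))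
    (beta : ∀ {M M' V V' : Term} {Ms Ms' : List Term} (hV : isValue V) (hV' : isValue V')
      (hM : Par M M'), motive M M' hM → ∀ hVV' : Par V V', motive V V' hVV' →
      ∀ ihs : Forall₂ (fun A A' => ∃ hA : Par A A', motive A A' hA) Ms Ms',
      motive _ _ (Par.beta hV hV' hM hVV' (ihs.imp fun _ _ h => h.1)))
    (sigma1 : ∀ {M M' N N' L L' : Term} {Ms Ms' : List Term}
      (hM : Par M M'), motive M M' hM → ∀ hN : Par N N', motive N N' hN →
      ∀ hL : Par L L', motive L L' hL →
      ∀ ihs : Forall₂ (fun A A' => ∃ hA : Par A A', motive A A' hA) Ms Ms',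
      motive _ _ (Par.sigma1 hM hN hL (ihs.imp fun _ _ h => h.1)))
    (sigma3 : ∀ {V V' L L' N N' : Term} {Ms Ms' : List Term} (hV : isValue V) (hV' : isValue V')
      (hVV' : Par V V'), motive V V' hVV' → ∀ hL : Par L L', motive L L' hL →
      ∀ hN : Par N N', motive N N' hN →
      ∀ ihs : Forall₂ (fun A A' => ∃ hA : Par A A', motive A A' hA) Ms Ms',
      motive _ _ (Par.sigma3 hV hV' hVV' hL hN (ihs.imp fun _ _ h => h.1)))
    {M N : Term} (h : Par M N) : motive M N h :=
  Par.rec (motive_1 := motive)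
    (motive_2 := fun Ms Ms' _ => Forall₂ (fun A A' => ∃ hA : Par A A', motive A A' hA) Ms Ms')
    (fun x _ _ _ ihs => var x ihs)
    (fun hM _ ihM ihs => lam hM ihM ihs)
    (fun hV hV' hM hVV' _ ihM ihV ihs => beta hV hV' hM ihM hVV' ihV ihs)
    (fun hM hN hL _ ihM ihN ihL ihs => sigma1 hM ihM hN ihN hL ihL ihs)
    (fun hV hV' hVV' hL hN _ ihV ihL ihN ihs => sigma3 hV hV' hVV' ihV hL ihL hN ihN ihs)
    Forall₂.nil (fun h _ ih ihs => Forall₂.cons ⟨h, ih⟩ ihs) h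

lemma par_appList {M M' : Term} (h : Par M M') {Ms Ms' : List Term}
    (hMs : Forall₂ Par Ms Ms') : Par (appList M Ms) (appList M' Ms') := by
  cases h with
  | var x h => simpa only [← appList_append] using Par.var x (rel_append h hMs)
  | lam hM h => simpa only [← appList_append] using Par.lam hM (rel_append h hMs)
  | beta hV hV' hM hVp h =>
    simpa only [← appList_append] using Par.beta hV hV' hM hVp (rel_append h hMs)
  | sigma1 hM hN hL h =>
    simpa only [← appList_append] using Par.sigma1 hM hN hL (rel_append h hMs)
  | sigma3 hV hV' hVp hL hN h =>
    simpa only [← appList_append] using Par.sigma3 hV hV' hVp hL hN (rel_append h hMs)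

lemma par_app {M M' N N' : Term} (hM : Par M M') (hN : Par N N') :
    Par (app M N) (app M' N') :=
  par_appList hM (Forall₂.cons hN Forall₂.nil)

lemma par_refl (M : Term) : Par M M := by
  induction M with
  | var x => exact Par.var x Forall₂.nil
  | lam M ih => exact Par.lam ih Forall₂.nil
  | app M N ihM ihN => exact par_app ihM ihN

lemma par_lift {M N : Term} (h : Par M N) (d : ℕ) : Par (lift d M) (lift d N) := by
  induction h using Par.induction generalizing d with
  | var x hMs =>
    simp only [lift_appList]
    exact par_appList (par_refl _) (rel_map (fun _ _ ⟨_, ih⟩ => ih d) hMs)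
  | lam _ ihM hMs =>
    simp only [lift_appList]
    exact par_appList (Par.lam (ihM (d + 1)) Forall₂.nil)
      (rel_map (fun _ _ ⟨_, ih⟩ => ih d) hMs)
  | beta hV hV' _ ihM _ ihV hMs =>
    rw [lift_appList, lift_appList, lift_subst_of_le _ _ (Nat.zero_le d)]
    exact Par.beta (isValue_lift hV) (isValue_lift hV') (ihM (d + 1)) (ihV d)
      (rel_map (fun _ _ ⟨_, ih⟩ => ih d) hMs)
  | sigma1 _ ihM _ ihN _ ihL hMs =>
    simp only [lift_appList, lift, ← lift_lift_of_le _ (Nat.zero_le d)]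
    exact Par.sigma1 (ihM (d + 1)) (ihN d) (ihL d) (rel_map (fun _ _ ⟨_, ih⟩ => ih d) hMs)
  | sigma3 hV hV' _ ihV _ ihL _ ihN hMs =>
    simp only [lift_appList, lift, ← lift_lift_of_le _ (Nat.zero_le d)]
    exact Par.sigma3 (isValue_lift hV) (isValue_lift hV') (ihV d) (ihL (d + 1)) (ihN d)
      (rel_map (fun _ _ ⟨_, ih⟩ => ih d) hMs)

lemma eq_var_of_par {x : ℕ} {T : Term} (h : Par (var x) T) : T = var x := by
  generalize e : var x = S at h
  cases h with
  | var y hMs =>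
    obtain ⟨⟨⟩, rfl⟩ := appList_inj (Ms := []) (isValue_var x) (isValue_var y) e
    cases hMs
    rfl
  | lam _ hMs => obtain ⟨⟨⟩, -⟩ := appList_inj (Ms := []) (isValue_var x) (isValue_lam _) e
  | _ => exact (not_isValue_appList_app _ _ _ (e ▸ isValue_var x)).elim

lemma exists_eq_lam_of_par {B T : Term} (h : Par (lam B) T) : ∃ B', T = lam B' ∧ Par B B' := by
  generalize e : lam B = S at h
  cases h with
  | var y hMs => obtain ⟨⟨⟩, -⟩ := appList_inj (Ms := []) (isValue_lam B) (isValue_var y) e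
  | lam hB hMs =>
    obtain ⟨⟨⟩, rfl⟩ := appList_inj (Ms := []) (isValue_lam B) (isValue_lam _) e
    cases hMs
    exact ⟨_, rfl, hB⟩
  | _ => exact (not_isValue_appList_app _ _ _ (e ▸ isValue_lam B)).elim

lemma isValue_of_par {V T : Term} (hV : isValue V) (h : Par V T) : isValue T := by
  cases V with
  | var x => rw [eq_var_of_par h]; trivial
  | lam B => obtain ⟨B', rfl, -⟩ := exists_eq_lam_of_par h; trivial
  | app => exact hV.elim

lemma par_subst {M M' : Term} (h : Par M M') {W W' : Term} (hW : isValue W)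
    (hWW' : Par W W') (k : ℕ) : Par (subst M k W) (subst M' k W') := by
  induction h using Par.induction generalizing W W' k with
  | var x ihs =>
    simp only [subst_appList]
    refine par_appList ?_ (rel_map (fun _ _ ⟨_, ih⟩ => ih hW hWW' k) ihs)
    simp only [subst]
    split_ifs <;> first | exact hWW' | exact par_refl _
  | lam _ ihM ihs =>
    simp only [subst_appList, subst]
    exact par_appList (Par.lam (ihM (isValue_lift hW) (par_lift hWW' 0) (k + 1)) Forall₂.nil)
      (rel_map (fun _ _ ⟨_, ih⟩ => ih hW hWW' k) ihs)
  | beta hV hV' _ ihM _ ihV ihs =>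
    rw [subst_appList, subst_appList, subst_subst_of_le _ _ _ (Nat.zero_le k)]
    exact Par.beta (isValue_subst hV hW k) (isValue_subst hV' (isValue_of_par hW hWW') k)
      (ihM (isValue_lift hW) (par_lift hWW' 0) (k + 1)) (ihV hW hWW' k)
      (rel_map (fun _ _ ⟨_, ih⟩ => ih hW hWW' k) ihs)
  | sigma1 _ ihM _ ihN _ ihL ihs =>
    simp only [subst_appList, subst, ← lift_subst_of_ge _ _ (Nat.zero_le k)]
    exact Par.sigma1 (ihM (isValue_lift hW) (par_lift hWW' 0) (k + 1)) (ihN hW hWW' k)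
      (ihL hW hWW' k) (rel_map (fun _ _ ⟨_, ih⟩ => ih hW hWW' k) ihs)
  | sigma3 hV hV' _ ihV _ ihL _ ihN ihs =>
    simp only [subst_appList, subst, ← lift_subst_of_ge _ _ (Nat.zero_le k)]
    exact Par.sigma3 (isValue_subst hV hW k) (isValue_subst hV' (isValue_of_par hW hWW') k)
      (ihV hW hWW' k) (ihL (isValue_lift hW) (par_lift hWW' 0) (k + 1)) (ihN hW hWW' k)
      (rel_map (fun _ _ ⟨_, ih⟩ => ih hW hWW' k) ihs)

lemma ipar_of_par {V T : Term} (hV : isValue V) (h : Par V T) : IPar V T := by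
  cases V with
  | var x => rw [eq_var_of_par h]; exact IPar.var x
  | lam B => obtain ⟨B', rfl, hB⟩ := exists_eq_lam_of_par h; exact IPar.lam hB
  | app => exact hV.elim

lemma par_of_ipar {P P' : Term} (h : IPar P P') : Par P P' := by
  induction h with
  | lam hN => exact Par.lam hN Forall₂.nil
  | var x => exact Par.var x Forall₂.nil
  | right hV _ hVV' _ hMs ihN => exact par_appList (par_app hVV' ihN) hMs

lemma isValue_of_ipar {P P' : Term} (h : IPar P P') (hP' : isValue P') : isValue P := by
  cases h with
  | lam _ => trivial
  | var _ => trivial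
  | right _ _ _ _ _ => exact (not_isValue_appList_app _ _ _ hP').elim

lemma ipar_subst {P P' : Term} (h : IPar P P') {W W' : Term} (hW : isValue W)
    (hWW' : Par W W') (k : ℕ) : IPar (subst P k W) (subst P' k W') := by
  induction h generalizing k with
  | lam hN => exact IPar.lam (par_subst hN (isValue_lift hW) (par_lift hWW' 0) (k + 1))
  | var x =>
    simp only [subst]
    split_ifs
    · exact ipar_of_par hW hWW'
    all_goals exact IPar.var _
  | right hV hV' hVV' _ hMs ihN =>
    simp only [subst_appList, subst]
    exact IPar.right (isValue_subst hV hW k) (isValue_subst hV' (isValue_of_par hW hWW') k)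
      (par_subst hVV' hW hWW' k) (ihN k)
      (rel_map (fun A A' (h : Par A A') => par_subst h hW hWW' k) hMs)

lemma not_isValue_of_headBeta {M N : Term} (h : HeadBeta M N) : ¬ isValue M := by
  cases h <;> exact not_isValue_appList_app _ _ _

lemma not_isValue_of_headSigma {M N : Term} (h : HeadSigma M N) : ¬ isValue N := by
  cases h <;> exact not_isValue_appList_app _ _ _

lemma headBeta_appList_cases {V X : Term} {Ms : List Term} (hV : isValue V)
    (h : HeadBeta (appList V Ms) X) :
    (∃ M W Ns, V = lam M ∧ Ms = W :: Ns ∧ isValue W ∧ X = appList (subst M 0 W) Ns) ∨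
    (∃ N N' Ns, Ms = N :: Ns ∧ HeadBeta N N' ∧ X = appList (app V N') Ns) := by
  generalize e : appList V Ms = S at h
  cases h with
  | beta M W Ns hW =>
    obtain ⟨rfl, rfl⟩ := appList_inj (Ms' := W :: Ns) hV (isValue_lam M) e
    exact Or.inl ⟨M, W, Ns, rfl, rfl, hW, rfl⟩
  | right V' Ns hV' hN =>
    obtain ⟨rfl, rfl⟩ := appList_inj (Ms' := _ :: Ns) hV hV' e
    exact Or.inr ⟨_, _, Ns, rfl, hN, rfl⟩

lemma headBeta_appList {M N : Term} (h : HeadBeta M N) (Ms : List Term) :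
    HeadBeta (appList M Ms) (appList N Ms) := by
  cases h with
  | beta M V Ns hV => simpa only [← appList_append] using HeadBeta.beta M V (Ns ++ Ms) hV
  | right V Ns hV hN => simpa only [← appList_append] using HeadBeta.right V (Ns ++ Ms) hV hN

lemma headSigma_appList {M N : Term} (h : HeadSigma M N) (Ms : List Term) :
    HeadSigma (appList M Ms) (appList N Ms) := by
  cases h with
  | sigma1 M N L Ns => simpa only [← appList_append] using HeadSigma.sigma1 M N L (Ns ++ Ms)
  | sigma3 V L N Ns hV => simpa only [← appList_append] using HeadSigma.sigma3 V L N (Ns ++ Ms) hV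
  | right V Ns hV hN => simpa only [← appList_append] using HeadSigma.right V (Ns ++ Ms) hV hN

lemma headRed_star_appList {M N : Term} (h : ReflTransGen HeadRed M N) (Ms : List Term) :
    ReflTransGen HeadRed (appList M Ms) (appList N Ms) :=
  h.lift (appList · Ms) fun _ _ h => h.imp (headBeta_appList · Ms) (headSigma_appList · Ms)

lemma headRed_star_arg {V N N' : Term} (hV : isValue V) (h : ReflTransGen HeadRed N N')
    (Ms : List Term) : ReflTransGen HeadRed (appList (app V N) Ms) (appList (app V N') Ms) :=
  h.lift (fun X => appList (app V X) Ms) fun _ _ h =>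
    h.imp (HeadBeta.right V Ms hV) (HeadSigma.right V Ms hV)

lemma headBeta_sigma1_contractum {M N L : Term} (hN : isValue N) (Ms : List Term) :
    HeadBeta (appList (app (lam (app M (lift 0 L))) N) Ms) (appList (app (subst M 0 N) L) Ms) := by
  simpa only [subst, subst_lift] using HeadBeta.beta (app M (lift 0 L)) N Ms hN

lemma headBeta_sigma3_contractum {V L N : Term} (hN : isValue N) (Ms : List Term) :
    HeadBeta (appList (app (lam (app (lift 0 V) L)) N) Ms) (appList (app V (subst L 0 N)) Ms) := by
  simpa only [subst, subst_lift] using HeadBeta.beta (app (lift 0 V) L) N Ms hN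

lemma headBeta_subst {M N : Term} (h : HeadBeta M N) {W : Term} (hW : isValue W) (k : ℕ) :
    HeadBeta (subst M k W) (subst N k W) := by
  induction h generalizing k with
  | beta M V Ms hV =>
    simp only [subst_appList, subst, subst_subst_of_le M V W (Nat.zero_le k)]
    exact HeadBeta.beta _ _ _ (isValue_subst hV hW k)
  | right V Ms hV _ ih =>
    simp only [subst_appList, subst]
    exact HeadBeta.right _ _ (isValue_subst hV hW k) (ih k)

lemma headSigma_subst {M N : Term} (h : HeadSigma M N) {W : Term} (hW : isValue W) (k : ℕ) :
    HeadSigma (subst M k W) (subst N k W) := by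
  induction h generalizing k with
  | sigma1 M N L Ms =>
    simp only [subst_appList, subst, ← lift_subst_of_ge L W (Nat.zero_le k)]
    exact HeadSigma.sigma1 _ _ _ _
  | sigma3 V L N Ms hV =>
    simp only [subst_appList, subst, ← lift_subst_of_ge V W (Nat.zero_le k)]
    exact HeadSigma.sigma3 _ _ _ _ (isValue_subst hV hW k)
  | right V Ms hV _ ih =>
    simp only [subst_appList, subst]
    exact HeadSigma.right _ _ (isValue_subst hV hW k) (ih k)

lemma headRed_star_subst {M N : Term} (h : ReflTransGen HeadRed M N) {W : Term}
    (hW : isValue W) (k : ℕ) : ReflTransGen HeadRed (subst M k W) (subst N k W) :=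
  h.lift (subst · k W) fun _ _ h => h.imp (headBeta_subst · hW k) (headSigma_subst · hW k)

lemma headSigma_postpone {M M₁ M₂ : Term} (hσ : HeadSigma M M₁) (hβ : HeadBeta M₁ M₂) :
    ∃ M₁', HeadBeta M M₁' ∧ ReflGen HeadSigma M₁' M₂ := by
  induction hσ generalizing M₂ with
  | sigma1 M N L Ms =>
    rcases headBeta_appList_cases (Ms := N :: Ms) (isValue_lam _) hβ with
      ⟨_, _, _, ⟨⟩, ⟨⟩, hN, rfl⟩ | ⟨_, N', _, ⟨⟩, hN, rfl⟩
    · refine ⟨appList (subst M 0 N) (L :: Ms), HeadBeta.beta M N (L :: Ms) hN, ?_⟩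
      simp only [subst, subst_lift]
      exact ReflGen.refl
    · exact ⟨appList (app (lam M) N') (L :: Ms), HeadBeta.right (lam M) (L :: Ms) trivial hN,
        ReflGen.single (HeadSigma.sigma1 M N' L Ms)⟩
  | sigma3 V L N Ms hV =>
    rcases headBeta_appList_cases (Ms := N :: Ms) (isValue_lam _) hβ with
      ⟨_, _, _, ⟨⟩, ⟨⟩, hN, rfl⟩ | ⟨_, N', _, ⟨⟩, hN, rfl⟩
    · refine ⟨appList (app V (subst L 0 N)) Ms,
        HeadBeta.right V Ms hV (HeadBeta.beta L N [] hN), ?_⟩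
      simp only [subst, subst_lift]
      exact ReflGen.refl
    · exact ⟨appList (app V (app (lam L) N')) Ms,
        HeadBeta.right V Ms hV (HeadBeta.right (lam L) [] trivial hN),
        ReflGen.single (HeadSigma.sigma3 V L N' Ms hV)⟩
  | right V Ms hV hσN ih =>
    rcases headBeta_appList_cases (Ms := _ :: Ms) hV hβ with
      ⟨_, _, _, -, ⟨⟩, hN, -⟩ | ⟨_, N', _, ⟨⟩, hN, rfl⟩
    · exact (not_isValue_of_headSigma hσN hN).elim
    · obtain ⟨N₁, hβN, hσN'⟩ := ih hN
      refine ⟨appList (app V N₁) Ms, HeadBeta.right V Ms hV hβN, ?_⟩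
      cases hσN' with
      | refl => exact ReflGen.refl
      | single h => exact ReflGen.single (HeadSigma.right V Ms hV h)

lemma halts_of_isValue {V : Term} (hV : isValue V) : Halts V := ⟨V, hV, ReflTransGen.refl⟩

lemma halts_of_headBeta {M N : Term} (h : HeadBeta M N) (hN : Halts N) : Halts M :=
  let ⟨V, hV, hNV⟩ := hN
  ⟨V, hV, ReflTransGen.head h hNV⟩

lemma halts_of_headSigma {M N : Term} (hσ : HeadSigma M N) (hN : Halts N) : Halts M := by
  obtain ⟨V, hV, hNV⟩ := hN
  induction hNV using ReflTransGen.head_induction_on generalizing M with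
  | refl => exact (not_isValue_of_headSigma hσ hV).elim
  | head hβ hNV ih =>
    obtain ⟨M₁, hβM, hσM₁⟩ := headSigma_postpone hσ hβ
    cases hσM₁ with
    | refl => exact ⟨V, hV, ReflTransGen.head hβM hNV⟩
    | single hσ' => exact halts_of_headBeta hβM (ih hσ')

lemma halts_of_headRed_star {M N : Term} (h : ReflTransGen HeadRed M N) (hN : Halts N) :
    Halts M := by
  induction h using ReflTransGen.head_induction_on with
  | refl => exact hN
  | head hMM' _ ih => exact hMM'.elim (halts_of_headBeta · ih) (halts_of_headSigma · ih)

lemma par_headBeta_simulation {M N : Term} (hp : Par M N) {M₁ : Term} (hβ : HeadBeta M M₁) :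
    ∃ N₁, ReflTransGen HeadRed N N₁ ∧ Par M₁ N₁ := by
  induction hp using Par.induction generalizing M₁ with
  | var x ihs =>
    rcases headBeta_appList_cases (isValue_var x) hβ with
      ⟨_, _, _, ⟨⟩, -⟩ | ⟨A, A₁, Ns, rfl, hβA, rfl⟩
    obtain _ | ⟨⟨-, ihA⟩, ihNs⟩ := ihs
    obtain ⟨A₂, hA, hA₁⟩ := ihA hβA
    exact ⟨_, headRed_star_arg (isValue_var x) hA _,
      par_appList (par_app (par_refl _) hA₁) (ihNs.imp fun _ _ h => h.1)⟩
  | lam hM _ ihs =>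
    rcases headBeta_appList_cases (isValue_lam _) hβ with
      ⟨_, W, Ns, ⟨⟩, rfl, hW, rfl⟩ | ⟨A, A₁, Ns, rfl, hβA, rfl⟩
    · obtain _ | ⟨⟨hWW', -⟩, ihNs⟩ := ihs
      exact ⟨_, .single (.inl (HeadBeta.beta _ _ _ (isValue_of_par hW hWW'))),
        par_appList (par_subst hM hW hWW' 0) (ihNs.imp fun _ _ h => h.1)⟩
    · obtain _ | ⟨⟨-, ihA⟩, ihNs⟩ := ihs
      obtain ⟨A₂, hA, hA₁⟩ := ihA hβA
      exact ⟨_, headRed_star_arg (isValue_lam _) hA _,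
        par_appList (par_app (Par.lam hM Forall₂.nil) hA₁) (ihNs.imp fun _ _ h => h.1)⟩
  | beta hV _ hM _ hVV' _ ihs =>
    rcases headBeta_appList_cases (Ms := _ :: _) (isValue_lam _) hβ with
      ⟨_, _, _, ⟨⟩, ⟨⟩, -, rfl⟩ | ⟨_, _, _, ⟨⟩, hβV, -⟩
    · exact ⟨_, ReflTransGen.refl,
        par_appList (par_subst hM hV hVV' 0) (ihs.imp fun _ _ h => h.1)⟩
    · exact (not_isValue_of_headBeta hβV hV).elim
  | sigma1 hM _ hN ihN hL _ ihs =>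
    rcases headBeta_appList_cases (Ms := _ :: _ :: _) (isValue_lam _) hβ with
      ⟨_, _, _, ⟨⟩, ⟨⟩, hN₀, rfl⟩ | ⟨_, N₁, _, ⟨⟩, hβN, rfl⟩
    · exact ⟨_, .single (.inl (headBeta_sigma1_contractum (isValue_of_par hN₀ hN) _)),
        par_appList (par_app (par_subst hM hN₀ hN 0) hL) (ihs.imp fun _ _ h => h.1)⟩
    · obtain ⟨N₂, hN', hN₁⟩ := ihN hβN
      exact ⟨_, headRed_star_arg (isValue_lam _) hN' _,
        Par.sigma1 hM hN₁ hL (ihs.imp fun _ _ h => h.1)⟩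
  | sigma3 hV hV' hVV' _ hL _ hN ihN ihs =>
    rcases headBeta_appList_cases (Ms := _ :: _) hV hβ with
      ⟨_, _, _, -, ⟨⟩, hA, -⟩ | ⟨_, _, _, ⟨⟩, hβA, rfl⟩
    · exact (not_isValue_appList_app _ _ [] hA).elim
    rcases headBeta_appList_cases (Ms := [_]) (isValue_lam _) hβA with
      ⟨_, _, _, ⟨⟩, ⟨⟩, hN₀, rfl⟩ | ⟨_, N₁, _, ⟨⟩, hβN, rfl⟩
    · exact ⟨_, .single (.inl (headBeta_sigma3_contractum (isValue_of_par hN₀ hN) _)),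
        par_appList (par_app hVV' (par_subst hL hN₀ hN 0)) (ihs.imp fun _ _ h => h.1)⟩
    · obtain ⟨N₂, hN', hN₁⟩ := ihN hβN
      exact ⟨_, headRed_star_arg (isValue_lam _) hN' _,
        Par.sigma3 hV hV' hVV' hL hN₁ (ihs.imp fun _ _ h => h.1)⟩

def HeadIPar (M N : Term) : Prop := ∃ P, ReflTransGen HeadRed M P ∧ IPar P N

lemma HeadIPar.head {M M₁ N : Term} (h : HeadRed M M₁) (h₁ : HeadIPar M₁ N) :
    HeadIPar M N :=
  let ⟨P, hM₁P, hPN⟩ := h₁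
  ⟨P, ReflTransGen.head h hM₁P, hPN⟩

lemma headIPar_appList {M N : Term} (h : HeadIPar M N) {Ms Ms' : List Term}
    (hMs : Forall₂ (fun A A' => ∃ _ : Par A A', HeadIPar A A') Ms Ms') :
    HeadIPar (appList M Ms) (appList N Ms') := by
  obtain ⟨P, hMP, hPN⟩ := h
  obtain _ | ⟨⟨hAA', A₀, hA, hA₀⟩, hNs⟩ := hMs
  · exact ⟨P, hMP, hPN⟩
  rename_i A A' Ns Ns'
  have hMP' := headRed_star_appList hMP (A :: Ns)
  replace hNs := hNs.imp fun _ _ h => h.1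
  cases hPN with
  | lam hB =>
    exact ⟨_, hMP'.trans (headRed_star_arg (isValue_lam _) hA Ns),
      IPar.right (isValue_lam _) (isValue_lam _) (Par.lam hB Forall₂.nil) hA₀ hNs⟩
  | var x =>
    exact ⟨_, hMP'.trans (headRed_star_arg (isValue_var x) hA Ns),
      IPar.right (isValue_var x) (isValue_var x) (par_refl _) hA₀ hNs⟩
  | right hV hV' hVV' hN hNs₀ =>
    refine ⟨_, hMP', ?_⟩
    simpa only [← appList_append] using
      IPar.right hV hV' hVV' hN (rel_append hNs₀ (Forall₂.cons hAA' hNs))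

lemma headIPar_subst {M M' : Term} (h : HeadIPar M M') {W W' : Term} (hW : isValue W)
    (hWW' : Par W W') (k : ℕ) : HeadIPar (subst M k W) (subst M' k W') :=
  let ⟨P, hMP, hPM'⟩ := h
  ⟨subst P k W, headRed_star_subst hMP hW k, ipar_subst hPM' hW hWW' k⟩

lemma headIPar_of_par {M N : Term} (h : Par M N) : HeadIPar M N := by
  induction h using Par.induction with
  | var x ihs => exact headIPar_appList ⟨_, ReflTransGen.refl, IPar.var x⟩ ihs
  | lam hM _ ihs => exact headIPar_appList ⟨_, ReflTransGen.refl, IPar.lam hM⟩ ihs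
  | beta hV _ _ ihM hVV' _ ihs =>
    exact headIPar_appList ((headIPar_subst ihM hV hVV' 0).head
      (.inl (HeadBeta.beta _ _ [] hV))) ihs
  | sigma1 hM _ _ ihN hL _ ihs =>
    obtain ⟨N₀, hN, hN₀⟩ := ihN
    exact headIPar_appList (HeadIPar.head (.inr (HeadSigma.sigma1 _ _ _ []))
      ⟨_, headRed_star_arg (isValue_lam _) hN [], IPar.right (isValue_lam _) (isValue_lam _)
        (Par.lam (par_app hM (par_lift hL 0)) Forall₂.nil) hN₀ Forall₂.nil⟩) ihs
  | sigma3 hV _ hVV' _ hL _ _ ihN ihs =>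
    obtain ⟨N₀, hN, hN₀⟩ := ihN
    exact headIPar_appList (HeadIPar.head (.inr (HeadSigma.sigma3 _ _ _ [] hV))
      ⟨_, headRed_star_arg (isValue_lam _) hN [], IPar.right (isValue_lam _) (isValue_lam _)
        (Par.lam (par_app (par_lift hVV' 0) hL) Forall₂.nil) hN₀ Forall₂.nil⟩) ihs

lemma ipar_headBeta_simulation {P N N₁ : Term} (h : IPar P N) (hβ : HeadBeta N N₁) :
    ∃ P₁, HeadBeta P P₁ ∧ Par P₁ N₁ := by
  induction h generalizing N₁ with
  | lam _ => exact (not_isValue_of_headBeta hβ trivial).elim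
  | var _ => exact (not_isValue_of_headBeta hβ trivial).elim
  | @right V V' A A' Ms Ms' hV hV' hVV' hA hMs ih =>
    rcases headBeta_appList_cases (Ms := _ :: _) hV' hβ with
      ⟨B', _, _, rfl, ⟨⟩, hA', rfl⟩ | ⟨_, A₁', _, ⟨⟩, hβA', rfl⟩
    · obtain ⟨B, rfl, hB⟩ : ∃ B, V = lam B ∧ Par B B' := by
        cases V with
        | var x => cases eq_var_of_par hVV'
        | lam B => obtain ⟨_, ⟨⟩, hB⟩ := exists_eq_lam_of_par hVV'; exact ⟨B, rfl, hB⟩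
        | app => exact hV.elim
      have hAv := isValue_of_ipar hA hA'
      exact ⟨_, HeadBeta.beta B A Ms hAv, par_appList (par_subst hB hAv (par_of_ipar hA) 0) hMs⟩
    · obtain ⟨A₁, hβA, hA₁⟩ := ih hβA'
      exact ⟨_, HeadBeta.right V Ms hV hβA, par_appList (par_app hVV' hA₁) hMs⟩

lemma par_preserves_halts {M N : Term} (hp : Par M N) (hM : Halts M) : Halts N := by
  obtain ⟨V, hV, hMV⟩ := hM
  induction hMV using ReflTransGen.head_induction_on generalizing N with
  | refl => exact halts_of_isValue (isValue_of_par hV hp)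
  | head hβ _ ih =>
    obtain ⟨N₁, hNN₁, hp₁⟩ := par_headBeta_simulation hp hβ
    exact halts_of_headRed_star hNN₁ (ih hp₁)

lemma par_reflects_halts {M N : Term} (hp : Par M N) (hN : Halts N) : Halts M := by
  obtain ⟨V, hV, hNV⟩ := hN
  induction hNV using ReflTransGen.head_induction_on generalizing M with
  | refl =>
    obtain ⟨P, hMP, hPV⟩ := headIPar_of_par hp
    exact halts_of_headRed_star hMP (halts_of_isValue (isValue_of_ipar hPV hV))
  | head hβ _ ih =>
    obtain ⟨P, hMP, hPN⟩ := headIPar_of_par hp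
    obtain ⟨P₁, hβP, hp₁⟩ := ipar_headBeta_simulation hPN hβ
    exact halts_of_headRed_star hMP (halts_of_headBeta hβP (ih hp₁))

lemma par_of_red {M N : Term} (h : Red M N) : Par M N := by
  induction h with
  | base h =>
    cases h with
    | beta M V hV => exact Par.beta hV hV (par_refl M) (par_refl V) Forall₂.nil
    | sigma1 M N L => exact Par.sigma1 (par_refl M) (par_refl N) (par_refl L) Forall₂.nil
    | sigma3 V L N hV =>
      exact Par.sigma3 hV hV (par_refl V) (par_refl L) (par_refl N) Forall₂.nil
  | lam _ ih => exact Par.lam ih Forall₂.nil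
  | appL N _ ih => exact par_app ih (par_refl N)
  | appR M _ ih => exact par_app (par_refl M) ih

lemma red_fill {M N : Term} (h : Red M N) (C : Ctx1) : Red (fill C M) (fill C N) := by
  induction C with
  | hole => exact h
  | lam C ih => exact Ctx.lam ih
  | appL C L ih => exact Ctx.appL L ih
  | appR L C ih => exact Ctx.appR L ih

lemma halts_iff_of_red {M N : Term} (h : Red M N) : Halts M ↔ Halts N :=
  ⟨par_preserves_halts (par_of_red h), par_reflects_halts (par_of_red h)⟩

end Term

open Term Relation in
theorem adequacy :
    (∀ M M2 : Term, ReflTransGen Red M M2 → (Halts M ↔ Halts M2)) ∧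
    (∀ M N : Term, Relation.EqvGen Red M N →
      ∀ C : Ctx1, Halts (fill C M) ↔ Halts (fill C N)) := by
  have observational (M N : Term) (h : EqvGen Red M N) (C : Ctx1) :
      Halts (fill C M) ↔ Halts (fill C N) := by
    induction h with
    | rel _ _ h => exact halts_iff_of_red (red_fill h C)
    | refl => rfl
    | symm _ _ _ ih => exact ih.symm
    | trans _ _ _ _ _ ih₁ ih₂ => exact ih₁.trans ih₂
  exact ⟨fun M N h => observational M N (EqvGen.reflTransGen_le_eqvGen _ _ _ h) .hole,
    observational⟩
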